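/- Sub-fidelity is sub-multiplicative: for density matrices A, B, C, D, E(A⊗B, C⊗D) ≤ E(A,C)·E(B,D), where E(X,Y) = tr(XY) + √(2[(tr XY)² − tr((XY)²)]). -/

import Mathlib

open Matrix Kronecker ComplexOrder

/-- Sub-fidelity `E(X,Y) = tr(XY) + √(2[(tr XY)² − tr(XYXY)])`. -/
noncomputable def subFid {n : Type*} [Fintype n] (X Y : Matrix n n ℂ) : ℝ :=
  ((X * Y).trace).re +
    Real.sqrt (2 * (((X * Y).trace).re ^ 2 - ((X * Y * X * Y).trace).re))

/-!
With `S = √X`, the traces `tr (X Y)` and `tr ((X Y)²)` are `tr P` and `tr (P²)` for the positive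
semidefinite matrix `P = S Y S`; by the spectral theorem they are real and `tr (P²) ≤ (tr P)²`.
Traces of Kronecker products factor, so the claim reduces to the scalar inequality
`a b + √(2((a b)² - p q)) ≤ (a + s) (b + t)` with `s = √(2(a² - p))`, `t = √(2(b² - q))`,
which follows from `√(2((a b)² - p q)) ≤ b s + a t`.
-/

namespace Matrix

variable {n 𝕜 : Type*} [Fintype n] [DecidableEq n] [RCLike 𝕜]

lemma IsHermitian.trace_cfc {A : Matrix n n 𝕜} (hA : A.IsHermitian) (f : ℝ → ℝ) :
    (cfc f A).trace = ∑ i, (f (hA.eigenvalues i) : 𝕜) := by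
  rw [hA.cfc_eq, IsHermitian.cfc, Unitary.conjStarAlgAut_apply, trace_mul_cycle,
    Unitary.coe_star_mul_self, one_mul, trace_diagonal]
  rfl

lemma IsHermitian.im_trace_eq_zero {A : Matrix n n 𝕜} (hA : A.IsHermitian) :
    RCLike.im A.trace = 0 := by
  simp [hA.trace_eq_sum_eigenvalues]

lemma PosSemidef.re_trace_mul_self_le_sq {A : Matrix n n 𝕜} (hA : A.PosSemidef) :
    RCLike.re (A * A).trace ≤ RCLike.re A.trace ^ 2 := by
  have hsq : A * A = cfc (· ^ 2 : ℝ → ℝ) A := by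
    rw [cfc_pow_id A 2 hA.isHermitian.isSelfAdjoint, sq]
  rw [hsq, hA.isHermitian.trace_cfc, hA.isHermitian.trace_eq_sum_eigenvalues]
  simp only [map_sum, RCLike.ofReal_re]
  exact Finset.sum_sq_le_sq_sum_of_nonneg fun i _ => hA.eigenvalues_nonneg i

open scoped MatrixOrder in
lemma PosSemidef.exists_trace_mul_eq {X Y : Matrix n n 𝕜} (hX : X.PosSemidef)
    (hY : Y.PosSemidef) :
    ∃ P : Matrix n n 𝕜, P.PosSemidef ∧ (X * Y).trace = P.trace ∧
      (X * Y * X * Y).trace = (P * P).trace := by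
  set S := CFC.sqrt X
  have hS : Sᴴ = S := (CFC.sqrt_nonneg X).posSemidef.1
  have hXS : X = S * S := (CFC.sqrt_mul_sqrt_self X hX.nonneg).symm
  refine ⟨S * Y * S, by simpa only [hS] using hY.mul_mul_conjTranspose_same S, ?_, ?_⟩
  · rw [hXS, mul_assoc, trace_mul_comm]
  · rw [hXS, show S * S * Y * (S * S) * Y = S * (S * Y * S * S * Y) by noncomm_ring,
      trace_mul_comm]
    noncomm_ring

end Matrix

lemma add_sqrt_two_mul_sq_sub_mul_le {a b p q : ℝ} (ha : 0 ≤ a) (hb : 0 ≤ b)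
    (hpa : p ≤ a ^ 2) (hqb : q ≤ b ^ 2) :
    a * b + √(2 * ((a * b) ^ 2 - p * q)) ≤
      (a + √(2 * (a ^ 2 - p))) * (b + √(2 * (b ^ 2 - q))) := by
  set s := √(2 * (a ^ 2 - p))
  set t := √(2 * (b ^ 2 - q))
  have hs : s ^ 2 = 2 * (a ^ 2 - p) := Real.sq_sqrt (by linarith)
  have ht : t ^ 2 = 2 * (b ^ 2 - q) := Real.sq_sqrt (by linarith)
  have hst : 0 ≤ s * t := by positivity
  -- `(b s + a t)² - 2((ab)² - pq) = 2(a² - p)(b² - q) + 2ab·st`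
  have hsqrt : √(2 * ((a * b) ^ 2 - p * q)) ≤ b * s + a * t := by
    refine Real.sqrt_le_iff.mpr ⟨by positivity, ?_⟩
    nlinarith [mul_nonneg (sub_nonneg.mpr hpa) (sub_nonneg.mpr hqb),
      mul_nonneg (mul_nonneg ha hb) hst]
  nlinarith

theorem subFidelity_subMultiplicative_general {N M : ℕ}
    (A C : Matrix (Fin N) (Fin N) ℂ) (B D : Matrix (Fin M) (Fin M) ℂ)
    (hA : A.PosSemidef) (hB : B.PosSemidef) (hC : C.PosSemidef) (hD : D.PosSemidef) :
    subFid (A ⊗ₖ B) (C ⊗ₖ D) ≤ subFid A C * subFid B D := by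
  obtain ⟨P, hP, hAC, hACAC⟩ := hA.exists_trace_mul_eq hC
  obtain ⟨Q, hQ, hBD, hBDBD⟩ := hB.exists_trace_mul_eq hD
  have htrace : ((A ⊗ₖ B) * (C ⊗ₖ D)).trace.re = P.trace.re * Q.trace.re := by
    rw [← mul_kronecker_mul, trace_kronecker, hAC, hBD, Complex.mul_re,
      show P.trace.im = 0 from hP.isHermitian.im_trace_eq_zero, zero_mul, sub_zero]
  have htrace_sq : ((A ⊗ₖ B) * (C ⊗ₖ D) * (A ⊗ₖ B) * (C ⊗ₖ D)).trace.re =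
      (P * P).trace.re * (Q * Q).trace.re := by
    rw [← mul_kronecker_mul, ← mul_kronecker_mul, ← mul_kronecker_mul, trace_kronecker, hACAC,
      hBDBD, Complex.mul_re, show (P * P).trace.im = 0 from (sq P ▸ hP.isHermitian.pow 2).im_trace_eq_zero,
      zero_mul, sub_zero]
  rw [subFid, subFid, subFid, htrace, htrace_sq, hAC, hACAC, hBD, hBDBD]
  exact add_sqrt_two_mul_sq_sub_mul_le (Complex.nonneg_iff.mp hP.trace_nonneg).1
    (Complex.nonneg_iff.mp hQ.trace_nonneg).1 hP.re_trace_mul_self_le_sq hQ.re_trace_mul_self_le_sq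

theorem subFidelity_subMultiplicative {N M : ℕ}
    (A C : Matrix (Fin N) (Fin N) ℂ) (B D : Matrix (Fin M) (Fin M) ℂ)
    (hA : A.PosSemidef) (hB : B.PosSemidef) (hC : C.PosSemidef) (hD : D.PosSemidef)
    (tA : A.trace = 1) (tB : B.trace = 1) (tC : C.trace = 1) (tD : D.trace = 1) :
    subFid (A ⊗ₖ B) (C ⊗ₖ D) ≤ subFid A C * subFid B D :=
  subFidelity_subMultiplicative_general A C B D hA hB hC hD
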